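/- Let V = V₁ ⊕ ⋯ ⊕ V_t be a direct sum of R-modules, and for each j let m_j : V → V be an R-linear automorphism with m_j(v) - v ∈ V_j for all v. If m_t ∘ ⋯ ∘ m₁ = id, then m_j = id for all j. -/

import Mathlib

def compUpTo {R : Type*} [CommRing R] {t : ℕ} {V : Fin t → Type*}
    [∀ i, AddCommGroup (V i)] [∀ i, Module R (V i)]
    (m : Fin t → ((∀ i, V i) ≃ₗ[R] (∀ i, V i))) : ℕ → ((∀ i, V i) ≃ₗ[R] (∀ i, V i))
  | 0 => LinearEquiv.refl R _
  | k + 1 => if h : k < t then (compUpTo m k).trans (m ⟨k, h⟩) else compUpTo m k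

/-!
Only `m j` can change the `j`-th coordinate. Write `u = (m_{j-1} ∘ ⋯ ∘ m_1) v`. Then the `j`-th
coordinate of `v = (m_t ∘ ⋯ ∘ m_1) v` equals that of `m_j u`, and also that of `u`. So `m_j u` and
`u` agree in every coordinate.
-/

namespace compUpTo

variable {R : Type*} [CommRing R] {t : ℕ} {V : Fin t → Type*}
    [∀ i, AddCommGroup (V i)] [∀ i, Module R (V i)]
    (m : Fin t → ((∀ i, V i) ≃ₗ[R] (∀ i, V i)))

theorem succ_of_lt {k : ℕ} (hk : k < t) :
    compUpTo m (k + 1) = (compUpTo m k).trans (m ⟨k, hk⟩) :=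
  dif_pos hk

theorem succ_of_le {k : ℕ} (hk : t ≤ k) : compUpTo m (k + 1) = compUpTo m k :=
  dif_neg hk.not_gt

variable {m}

theorem apply_eq_of_notMem_Ico (hm : ∀ j v i, i ≠ j → m j v i = v i) {j : Fin t}
    {a b : ℕ} (hab : a ≤ b) (hj : (j : ℕ) ∉ Set.Ico a b) (v : ∀ i, V i) :
    compUpTo m b v j = compUpTo m a v j := by
  induction b, hab using Nat.le_induction with
  | base => rfl
  | succ k hak ih =>
    have hjk : (j : ℕ) ≠ k := fun h ↦ hj ⟨h ▸ hak, h ▸ k.lt_succ_self⟩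
    rw [← ih fun h ↦ hj ⟨h.1, h.2.trans k.lt_succ_self⟩]
    rcases lt_or_ge k t with hk | hk
    · rw [succ_of_lt m hk, LinearEquiv.trans_apply, hm _ _ _ (Fin.ne_of_val_ne hjk)]
    · rw [succ_of_le m hk]

end compUpTo

/-- Trivial monodromy at infinity implies every monodromy operator is trivial. -/
theorem stmt3 {R : Type*} [CommRing R] {t : ℕ} {V : Fin t → Type*}
    [∀ i, AddCommGroup (V i)] [∀ i, Module R (V i)]
    (m : Fin t → ((∀ i, V i) ≃ₗ[R] (∀ i, V i)))
    (hm : ∀ j : Fin t, ∀ v : ∀ i, V i, ∀ i, i ≠ j → (m j v - v) i = 0)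
    (h : compUpTo m t = LinearEquiv.refl R (∀ i, V i)) :
    ∀ j, m j = LinearEquiv.refl R (∀ i, V i) := by
  have hm' : ∀ j v i, i ≠ j → m j v i = v i := fun j v i hij ↦ sub_eq_zero.mp (hm j v i hij)
  intro j
  ext u i
  rcases eq_or_ne i j with rfl | hij
  · obtain ⟨v, rfl⟩ := (compUpTo m i).surjective u
    calc m i (compUpTo m i v) i
        = compUpTo m (i + 1) v i := by rw [compUpTo.succ_of_lt m i.isLt]; rfl
      _ = compUpTo m t v i := (compUpTo.apply_eq_of_notMem_Ico hm' i.isLt (by simp) v).symm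
      _ = compUpTo m 0 v i := by rw [h]; rfl
      _ = compUpTo m i v i := (compUpTo.apply_eq_of_notMem_Ico hm' (Nat.zero_le _) (by simp) v).symm
  · exact hm' j u i hij
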